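/- For every λ > 0, ϱ > 0, and p ∈ (0,1), the average transmission power is bounded as p · ϱ · ∫_{−(1/λ) ln p}^∞ (λ/x) e^{−λ x} dx < ϱ λ p² · ln(1 − 1/ln p). -/

import Mathlib

open MeasureTheory Real Set Filter Topology

/-!
The substitution `t = λx` turns the integral into `λ E₁(-ln p)`, where
`E₁(y) = ∫_y^∞ e^{-t}/t dt`, and `e^{ln p} = p`, so everything reduces to the bound
`E₁(y) < e^{-y} ln(1 + 1/y)` for `y > 0`. For that, `F(t) = -e^{-t} ln(1 + 1/t)` tends to `0` at
infinity and `F'(t) - e^{-t}/t = e^{-t} (ln(1 + 1/t) - 1/(t + 1)) > 0`, so `E₁(y) < -F(y)`.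
-/

theorem setIntegral_lt_setIntegral_of_forall_lt {X : Type*} [MeasurableSpace X] {μ : Measure X}
    {s : Set X} {f g : X → ℝ} (hs : MeasurableSet s) (hμs : μ s ≠ 0) (hf : IntegrableOn f s μ)
    (hg : IntegrableOn g s μ) (hlt : ∀ x ∈ s, f x < g x) :
    ∫ x in s, f x ∂μ < ∫ x in s, g x ∂μ := by
  have hsupp : Function.support (g - f) ∩ s = s :=
    inter_eq_right.2 fun x hx => (sub_pos.2 (hlt x hx)).ne'
  have hnonneg : 0 ≤ᵐ[μ.restrict s] g - f :=
    (ae_restrict_mem hs).mono fun x hx => (sub_pos.2 (hlt x hx)).le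
  rw [← sub_pos, ← integral_sub hg hf, ← Pi.sub_def,
    setIntegral_pos_iff_support_of_nonneg_ae hnonneg (hg.sub hf), hsupp]
  exact pos_iff_ne_zero.2 hμs

theorem integral_Ioi_lt_of_lt_hasDerivAt {f F F' : ℝ → ℝ} {a l : ℝ}
    (hF : ∀ x ∈ Ici a, HasDerivAt F (F' x) x) (hFl : Tendsto F atTop (𝓝 l))
    (hf : ContinuousOn f (Ioi a)) (hf0 : ∀ x ∈ Ioi a, 0 ≤ f x) (hlt : ∀ x ∈ Ioi a, f x < F' x) :
    ∫ x in Ioi a, f x < l - F a := by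
  have hF'0 : ∀ x ∈ Ioi a, 0 ≤ F' x := fun x hx => (hf0 x hx).trans (hlt x hx).le
  have hF'int : IntegrableOn F' (Ioi a) := integrableOn_Ioi_deriv_of_nonneg' hF hF'0 hFl
  have hfint : IntegrableOn f (Ioi a) := by
    refine hF'int.mono' (hf.aestronglyMeasurable measurableSet_Ioi) ?_
    filter_upwards [ae_restrict_mem measurableSet_Ioi] with x hx
    rw [norm_of_nonneg (hf0 x hx)]
    exact (hlt x hx).le
  rw [← integral_Ioi_of_hasDerivAt_of_nonneg' hF hF'0 hFl]
  exact setIntegral_lt_setIntegral_of_forall_lt measurableSet_Ioi (by simp) hfint hF'int hlt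

theorem inv_add_one_lt_log_one_add_inv {t : ℝ} (ht : 0 < t) : (t + 1)⁻¹ < log (1 + t⁻¹) := by
  refine lt_of_le_of_lt ?_ (lt_log_one_add_of_pos (inv_pos.2 ht))
  rw [div_eq_mul_inv, ← inv_inv (t⁻¹ + 2)]
  rw [inv_le_iff_one_le_mul₀ (by positivity)]
  field_simp
  linarith

noncomputable def expIntegralE₁ (y : ℝ) : ℝ := ∫ t in Ioi y, exp (-t) / t

theorem expIntegralE₁_lt {y : ℝ} (hy : 0 < y) : expIntegralE₁ y < exp (-y) * log (1 + y⁻¹) := by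
  set F : ℝ → ℝ := fun t => -(exp (-t) * log (1 + t⁻¹))
  set F' : ℝ → ℝ := fun t =>
    -(exp (-t) * -1 * log (1 + t⁻¹) + exp (-t) * (-(t ^ 2)⁻¹ / (1 + t⁻¹)))
  have hF : ∀ t ∈ Ici y, HasDerivAt F (F' t) t := by
    intro t ht
    have ht0 : 0 < t := hy.trans_le ht
    have hlog := ((hasDerivAt_inv ht0.ne').const_add 1).log (by positivity)
    exact ((hasDerivAt_neg t).exp.mul hlog).neg
  have hFlim : Tendsto F atTop (𝓝 0) := by
    have hexp : Tendsto (fun t : ℝ => exp (-t)) atTop (𝓝 0) := tendsto_exp_neg_atTop_nhds_zero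
    have hlog : Tendsto (fun t : ℝ => log (1 + t⁻¹)) atTop (𝓝 0) := by
      have h : Tendsto (fun t : ℝ => 1 + t⁻¹) atTop (𝓝 1) := by
        simpa using tendsto_inv_atTop_zero.const_add (1 : ℝ)
      simpa [Function.comp_def] using (continuousAt_log one_ne_zero).tendsto.comp h
    simpa using (hexp.mul hlog).neg
  have hlt : ∀ t ∈ Ioi y, exp (-t) / t < F' t := by
    intro t ht
    have ht0 : 0 < t := hy.trans ht
    have hgap : F' t - exp (-t) / t = exp (-t) * (log (1 + t⁻¹) - (t + 1)⁻¹) := by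
      simp only [F']
      field_simp
      ring
    rw [← sub_pos, hgap]
    exact mul_pos (exp_pos _) (sub_pos.2 (inv_add_one_lt_log_one_add_inv ht0))
  have hcont : ContinuousOn (fun t => exp (-t) / t) (Ioi y) :=
    ContinuousOn.div (by fun_prop) (by fun_prop) fun t ht => (hy.trans ht).ne'
  have hnonneg : ∀ t ∈ Ioi y, 0 ≤ exp (-t) / t := fun t ht =>
    (div_pos (exp_pos _) (hy.trans ht)).le
  simpa [F, expIntegralE₁] using integral_Ioi_lt_of_lt_hasDerivAt hF hFlim hcont hnonneg hlt

theorem integral_Ioi_div_mul_exp_neg_mul {lam : ℝ} (hlam : 0 < lam) (a : ℝ) :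
    ∫ x in Ioi a, lam / x * exp (-(lam * x)) = lam * expIntegralE₁ (lam * a) := by
  have hrw : ∀ x, lam / x * exp (-(lam * x)) = lam ^ 2 * (exp (-(lam * x)) / (lam * x)) := by
    intro x
    rw [sq, mul_assoc, mul_div_assoc', mul_div_mul_left _ _ hlam.ne', div_mul_eq_mul_div,
      mul_div_assoc]
  simp_rw [hrw]
  rw [integral_const_mul, integral_comp_mul_left_Ioi (fun t => exp (-t) / t) a hlam,
    smul_eq_mul, expIntegralE₁]
  field_simp

/-- **Closed-form upper bound on the average transmission power**
(Paper: closed-form upper approximation of `P^comm` via the bound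
`E₁(x) < e^{−x} ln(1 + 1/x)`). For `λ > 0`, `ϱ > 0`, and `p ∈ (0,1)`, with
channel-gain threshold `g_th = −(1/λ) ln p`,
`p ϱ ∫_{g_th}^∞ (λ/x) e^{−λx} dx < ϱ λ p² ln(1 − 1/ln p)`. -/
theorem average_power_lt_closed_form
    (lam ϱ p : ℝ) (hlam : 0 < lam) (hϱ : 0 < ϱ) (hp : p ∈ Set.Ioo (0 : ℝ) 1) :
    p * ϱ * ∫ x in Set.Ioi (-(1 / lam) * Real.log p),
        (lam / x) * Real.exp (-(lam * x))
      < ϱ * lam * p ^ 2 * Real.log (1 - 1 / Real.log p) := by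
  obtain ⟨hp0, hp1⟩ := hp
  have hlogp : log p < 0 := log_neg hp0 hp1
  have hthreshold : lam * (-(1 / lam) * log p) = -log p := by field_simp
  have hE₁ : expIntegralE₁ (-log p) < p * log (1 - 1 / log p) := by
    have h := expIntegralE₁_lt (neg_pos.2 hlogp)
    rwa [neg_neg, exp_log hp0, inv_neg, ← sub_eq_add_neg, ← one_div] at h
  rw [integral_Ioi_div_mul_exp_neg_mul hlam, hthreshold]
  calc p * ϱ * (lam * expIntegralE₁ (-log p))
      < p * ϱ * (lam * (p * log (1 - 1 / log p))) := by gcongr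
    _ = ϱ * lam * p ^ 2 * log (1 - 1 / log p) := by ring
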